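/- Let j < k ≤ n be positive integers, let A be a traversal path containing j and some element ≥ n, and let B be a traversal path starting at some index ≤ j and containing k. Let m be the last element of A that is ≤ k. Then m ∈ [j, k], m lies on B, and if m < k then the hop of A leaving m has length 2^l with 2^l | m and m + 2^l > k, while 2^l does not divide k. -/

import Mathlib

/-- A single skip-list hop: `b = a + 2 ^ l` for some level `l` with `2 ^ l ∣ a`. -/
def isHop (a b : ℕ) : Prop := ∃ l : ℕ, 2 ^ l ∣ a ∧ b = a + 2 ^ l

/-- A valid traversal path. -/
def IsPath (P : List ℕ) : Prop := P.Chain' isHop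

lemma hop_lt {a b : ℕ} (h : isHop a b) : a < b := by
  obtain ⟨l, -, rfl⟩ := h
  have : 0 < 2 ^ l := Nat.pow_pos (by norm_num)
  omega

lemma path_pairwise {P : List ℕ} (h : IsPath P) : P.Pairwise (· < ·) :=
  List.isChain_iff_pairwise.mp (h.imp fun _ _ => hop_lt)

lemma head_le {y : ℕ} {t : List ℕ} (h : IsPath (y :: t)) {z : ℕ} (hz : z ∈ y :: t) :
    y ≤ z := by
  have hp := path_pairwise h
  rcases List.mem_cons.mp hz with rfl | hz
  · exact le_refl z
  · exact ((List.pairwise_cons.mp hp).1 z hz).le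

lemma crossing {m k l x p : ℕ} (hml : 2 ^ l ∣ m) (hkl : k < m + 2 ^ l)
    (hpx : 2 ^ p ∣ x) (hxm : x < m) (hyk : x + 2 ^ p ≤ k) : x + 2 ^ p ≤ m := by
  rcases le_or_gt p l with h | h
  · have h1 : 2 ^ p ∣ m := dvd_trans (pow_dvd_pow 2 h) hml
    have h2 : 2 ^ p ∣ m - x := Nat.dvd_sub h1 hpx
    have h3 : 2 ^ p ≤ m - x := Nat.le_of_dvd (by omega) h2
    omega
  · by_contra hc
    push_neg at hc
    have h1 : 2 ^ l ∣ x + 2 ^ p :=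
      dvd_add (dvd_trans (pow_dvd_pow 2 h.le) hpx) (pow_dvd_pow 2 h.le)
    have h2 : 2 ^ l ∣ (x + 2 ^ p) - m := Nat.dvd_sub h1 hml
    have h3 : 2 ^ l ≤ (x + 2 ^ p) - m := Nat.le_of_dvd (by omega) h2
    omega

lemma reach {m k l : ℕ} (hml : 2 ^ l ∣ m) (hmk : m ≤ k) (hkl : k < m + 2 ^ l) :
    ∀ P : List ℕ, IsPath P → ∀ b, P.head? = some b → b ≤ m → k ∈ P → m ∈ P := by
  intro P
  induction P with
  | nil => simp
  | cons x t ih =>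
    intro hP b hb hbm hkP
    simp only [List.head?_cons, Option.some.injEq] at hb
    subst hb
    rcases eq_or_lt_of_le hbm with rfl | hxm
    · exact List.mem_cons_self
    · have hkx : k ≠ x := by omega
      have hkt : k ∈ t := by
        rcases List.mem_cons.mp hkP with h | h
        · exact absurd h hkx
        · exact h
      cases t with
      | nil => simp at hkt
      | cons y t' =>
        have hhop : isHop x y := (List.isChain_cons_cons.mp hP).1
        have hPt : IsPath (y :: t') := (List.isChain_cons_cons.mp hP).2
        have hyk : y ≤ k := head_le hPt hkt
        obtain ⟨p, hpx, rfl⟩ := hhop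
        have hym : x + 2 ^ p ≤ m := crossing hml hkl hpx hxm hyk
        exact List.mem_cons_of_mem _ (ih hPt _ rfl hym hkt)

/-- Quantitative parallel-paths lemma: let `A` be a traversal path containing `j` and
some element `≥ n`, let `B` be a traversal path starting at or before `j` and containing
`k` (with `j < k ≤ n`), and let `m` be the last element of `A` that is `≤ k`.  Then
`m ∈ [j, k]`, `m` lies on `B`, and if `m < k` then the hop of `A` leaving `m` has length
`2 ^ l` with `2 ^ l ∣ m`, `m + 2 ^ l > k`, and `2 ^ l ∤ k`. -/
theorem stmt17 (j k n : ℕ) (hj : 0 < j) (hjk : j < k) (hkn : k ≤ n)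
    (A B : List ℕ) (hA : IsPath A) (hB : IsPath B)
    (hjA : j ∈ A) (hAn : ∃ a ∈ A, n ≤ a)
    (hBstart : ∃ b, B.head? = some b ∧ b ≤ j) (hkB : k ∈ B)
    (m : ℕ) (hmA : m ∈ A) (hmk : m ≤ k) (hlast : ∀ x ∈ A, x ≤ k → x ≤ m) :
    j ≤ m ∧ m ∈ B ∧
    (m < k → ∀ x : ℕ, [m, x] <:+: A →
      ∃ l : ℕ, x = m + 2 ^ l ∧ 2 ^ l ∣ m ∧ k < m + 2 ^ l ∧ ¬ 2 ^ l ∣ k) := by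
  have hjm : j ≤ m := hlast j hjA hjk.le
  have hop3 : m < k → ∀ x : ℕ, [m, x] <:+: A →
      ∃ l : ℕ, x = m + 2 ^ l ∧ 2 ^ l ∣ m ∧ k < m + 2 ^ l ∧ ¬ 2 ^ l ∣ k := by
    intro hmk' x hinf
    have hchain : List.Chain' isHop [m, x] := hA.infix hinf
    obtain ⟨l, hml, rfl⟩ := List.isChain_pair.mp hchain
    have hxA : m + 2 ^ l ∈ A := hinf.sublist.mem (by simp)
    have hkx : k < m + 2 ^ l := by
      by_contra hc
      push_neg at hc
      have := hlast _ hxA hc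
      have : 0 < 2 ^ l := Nat.pow_pos (by norm_num)
      omega
    refine ⟨l, rfl, hml, hkx, fun hdvd => ?_⟩
    have h2 : 2 ^ l ∣ k - m := Nat.dvd_sub hdvd hml
    have h3 : 2 ^ l ≤ k - m := Nat.le_of_dvd (by omega) h2
    omega
  refine ⟨hjm, ?_, hop3⟩
  rcases eq_or_lt_of_le hmk with rfl | hmk'
  · exact hkB
  · -- find the hop of A leaving m
    obtain ⟨s, t, rfl⟩ := List.append_of_mem hmA
    obtain ⟨a, haA, hna⟩ := hAn
    have hka : k < a := by
      rcases lt_or_ge k a with h | h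
      · exact h
      · have := hlast a haA h
        omega
    cases t with
    | nil =>
      -- m is last; but a ∈ A with a > k > m, and all of s is < m
      have hp := path_pairwise hA
      rcases List.mem_append.mp haA with h | h
      · have := (List.pairwise_append.mp hp).2.2 a h m (by simp)
        omega
      · simp at h
        omega
    | cons x t' =>
      have hinf : [m, x] <:+: s ++ m :: x :: t' := ⟨s, t', by simp⟩
      obtain ⟨l, -, hml, hkx, -⟩ := hop3 hmk' x hinf
      obtain ⟨b, hbh, hbj⟩ := hBstart
      exact reach hml hmk hkx B hB b hbh (by omega) hkB
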